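/- (Pliss-type lemma) Let χ : X → {0,1}, let T : X → X, and let x ∈ X, and write S_j(y) = ∑_{i=0}^{j−1} χ(T^i y). Suppose there exist n_k → ∞ with (1/n_k)∑_{j=0}^{n_k−1} χ(T^j x) ≥ r. Then for every r' ∈ (0, r) there exist m'_k → ∞ such that for every k and every 1 ≤ j ≤ m'_k, S_j(T^{m'_k − j} x) ≥ r'·j; that is, there are arbitrarily large times m' such that all suffix-averages of the orbit segment x, Tx, ..., T^{m'−1}x are at least r'. -/
import Mathlib


theorem pliss_lemma (a : ℕ → ℝ) (r r' : ℝ)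
    (h01 : ∀ i, a i = 0 ∨ a i = 1) (hr' : 0 < r') (hr : r' < r) (hr1 : r ≤ 1)
    (hfreq : ∀ N : ℕ, ∃ n ≥ N, 0 < n ∧ r * n ≤ ∑ i ∈ Finset.Icc 1 n, a i) :
    ∀ M : ℕ, ∃ m ≥ M, ∀ j : ℕ, 1 ≤ j → j ≤ m →
      r' * j ≤ ∑ i ∈ Finset.Icc (m - j + 1) m, a i := by
  intro M
  set f : ℕ → ℝ := fun n => (∑ i ∈ Finset.Icc 1 n, a i) - r' * n with hf
  obtain ⟨C, hC⟩ : ∃ C, ∀ l < M, f l ≤ C := by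
    refine ⟨(Finset.range (M + 1)).sup' (by simp) f, fun l hl => ?_⟩
    exact Finset.le_sup' f (Finset.mem_range.mpr (by omega))
  have hrr' : (0:ℝ) < r - r' := by linarith
  obtain ⟨N, hN⟩ := exists_nat_gt (C / (r - r'))
  have hCN : C < (r - r') * N := by
    rw [div_lt_iff₀ hrr'] at hN; linarith
  obtain ⟨n, hnN, hnpos, hsum⟩ := hfreq N
  have hfn : C < f n := by
    have hcast : (N : ℝ) ≤ (n : ℝ) := by exact_mod_cast hnN
    have : (r - r') * N ≤ (r - r') * n := by nlinarith
    have : (r - r') * n ≤ f n := by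
      simp only [hf]
      nlinarith
    linarith [hCN]
  obtain ⟨m, hm_mem, hm_max⟩ := Finset.exists_max_image (Finset.Icc 0 n) f ⟨n, by simp⟩
  have hmn : m ≤ n := (Finset.mem_Icc.mp hm_mem).2
  have hfm : f n ≤ f m := hm_max n (by simp)
  have hmM : M ≤ m := by
    by_contra h
    push_neg at h
    have := hC m h
    linarith
  refine ⟨m, hmM, fun j hj1 hjm => ?_⟩
  have hsub : f (m - j) ≤ f m := hm_max (m - j) (Finset.mem_Icc.mpr ⟨Nat.zero_le _, by omega⟩)
  have hsplit : (∑ i ∈ Finset.Icc 1 (m - j), a i) + (∑ i ∈ Finset.Icc (m - j + 1) m, a i)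
      = ∑ i ∈ Finset.Icc 1 m, a i := by
    rw [show Finset.Icc (m - j + 1) m = Finset.Ioc (m - j) m from Finset.Icc_add_one_left_eq_Ioc _ _,
      show Finset.Icc 1 (m - j) = Finset.Ioc 0 (m - j) from Finset.Icc_add_one_left_eq_Ioc 0 _,
      show Finset.Icc 1 m = Finset.Ioc 0 m from Finset.Icc_add_one_left_eq_Ioc 0 m]
    exact Finset.sum_Ioc_consecutive a (Nat.zero_le _) (by omega)
  have hcast : ((m - j : ℕ) : ℝ) = (m : ℝ) - (j : ℝ) := by
    have := Nat.cast_sub hjm (R := ℝ); exact this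
  simp only [hf] at hsub
  rw [hcast] at hsub
  linarith
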